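/- Synthesizability at states simulating a valid model (Lemma part_val_syn): if k' ≼ k, f ∈ part(x, g), and k' ⊨ g, then (x,g) ↑ f with respect to →_n, for every n ∈ ℕ. -/

import Mathlib

/-- A Kripke structure with labeled transitions (Kripke-LTS). -/
structure KLTS (P E : Type) where
  X : Type
  L : X → Set P
  T : X → E → X → Prop
  init : X

/-- State-based (Boolean) formulas. -/
inductive BF (P : Type) where
  | tt : BF P
  | ff : BF P
  | atom : P → BF P
  | neg : BF P → BF P
  | and : BF P → BF P → BF P
  | or : BF P → BF P → BF P

/-- Satisfaction of a state-based formula by a label set. -/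
def BSat {P : Type} (A : Set P) : BF P → Prop
  | .tt => True
  | .ff => False
  | .atom p => p ∈ A
  | .neg b => ¬ BSat A b
  | .and b c => BSat A b ∧ BSat A c
  | .or b c => BSat A b ∨ BSat A c

/-- The modal requirement logic F. -/
inductive F (P E : Type) where
  | base : BF P → F P E
  | and : F P E → F P E → F P E
  | or : BF P → F P E → F P E
  | box : E → F P E → F P E
  | dia : E → F P E → F P E
  | inv : F P E → F P E
  | reach : BF P → F P E
  | dlf : F P E

variable {P E : Type}

/-- Reachability (reflexive-transitive closure, ignoring event labels). -/
def KLTS.Star (k : KLTS P E) : k.X → k.X → Prop :=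
  Relation.ReflTransGen (fun a b => ∃ e, k.T a e b)

/-- Validity of a modal formula at a Kripke-LTS. -/
def FSat : KLTS P E → F P E → Prop
  | k, .base b => BSat (k.L k.init) b
  | k, .and f g => FSat k f ∧ FSat k g
  | k, .or b f => BSat (k.L k.init) b ∨ FSat k f
  | k, .box e f => ∀ x', k.T k.init e x' → FSat ⟨k.X, k.L, k.T, x'⟩ f
  | k, .dia e f => ∃ x', k.T k.init e x' ∧ FSat ⟨k.X, k.L, k.T, x'⟩ f
  | k, .inv f => ∀ x', k.Star k.init x' → FSat ⟨k.X, k.L, k.T, x'⟩ f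
  | k, .reach b => ∃ x', k.Star k.init x' ∧ BSat (k.L x') b
  | k, .dlf => ∃ e x', k.T k.init e x'

/-- R is a simulation relation between k' and k. -/
def SimRel (k' k : KLTS P E) (R : k'.X → k.X → Prop) : Prop :=
  ∀ y' y, R y' y → k'.L y' = k.L y ∧
    ∀ e z', k'.T y' e z' → ∃ z, k.T y e z ∧ R z' z

/-- Simulation preorder. -/
def Sim (k' k : KLTS P E) : Prop :=
  ∃ R : k'.X → k.X → Prop, R k'.init k.init ∧ SimRel k' k R

/-- R is a partial bisimulation relation (w.r.t. uncontrollable events U). -/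
def PBisRel (U : Set E) (k' k : KLTS P E) (R : k'.X → k.X → Prop) : Prop :=
  ∀ y' y, R y' y → k'.L y' = k.L y ∧
    (∀ e z', k'.T y' e z' → ∃ z, k.T y e z ∧ R z' z) ∧
    (∀ e z, e ∈ U → k.T y e z → ∃ z', k'.T y' e z' ∧ R z' z)

/-- Partial bisimulation preorder. -/
def PBis (U : Set E) (k' k : KLTS P E) : Prop :=
  ∃ R : k'.X → k.X → Prop, R k'.init k.init ∧ PBisRel U k' k R

/-- The sub-formula relation. -/
inductive SubF : F P E → F P E → Prop where
  | refl (f : F P E) : SubF f f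
  | andL {f g h : F P E} : SubF f g → SubF f (.and g h)
  | andR {f g h : F P E} : SubF f h → SubF f (.and g h)
  | inv {f g : F P E} : SubF f g → SubF f (.inv g)

/-- The state-relative part relation. -/
inductive PartF {X : Type} (L : X → Set P) (x : X) : F P E → F P E → Prop where
  | refl (f : F P E) : PartF L x f f
  | andL {f g h : F P E} : PartF L x f g → PartF L x f (.and g h)
  | andR {f g h : F P E} : PartF L x f h → PartF L x f (.and g h)
  | or {b : BF P} {f g : F P E} : ¬ BSat (L x) b → PartF L x f g → PartF L x f (.or b g)
  | inv {f g : F P E} : PartF L x f g → PartF L x f (.inv g)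

/-- The starting point of synthesis: transition relation over state-formula pairs. -/
inductive Step0 (k : KLTS P E) : k.X × F P E → E → k.X × F P E → Prop where
  | base {x x' : k.X} {e : E} {b : BF P} :
      k.T x e x' → Step0 k (x, .base b) e (x', .base .tt)
  | and_sub {x x' : k.X} {e : E} {f g f' g' : F P E} :
      Step0 k (x, f) e (x', f') → Step0 k (x, g) e (x', g') → SubF g' f' →
      Step0 k (x, .and f g) e (x', f')
  | and_nsub {x x' : k.X} {e : E} {f g f' g' : F P E} :
      Step0 k (x, f) e (x', f') → Step0 k (x, g) e (x', g') → ¬ SubF g' f' →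
      Step0 k (x, .and f g) e (x', .and f' g')
  | or_true {x x' : k.X} {e : E} {b : BF P} {f : F P E} :
      k.T x e x' → BSat (k.L x) b → Step0 k (x, .or b f) e (x', .base .tt)
  | or_step {x x' : k.X} {e : E} {b : BF P} {f f' : F P E} :
      Step0 k (x, f) e (x', f') → Step0 k (x, .or b f) e (x', f')
  | box_same {x x' : k.X} {e : E} {f : F P E} :
      k.T x e x' → Step0 k (x, .box e f) e (x', f)
  | box_other {x x' : k.X} {e e' : E} {f : F P E} :
      k.T x e x' → e ≠ e' → Step0 k (x, .box e' f) e (x', .base .tt)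
  | dia_same {x x' : k.X} {e : E} {f : F P E} :
      k.T x e x' → Step0 k (x, .dia e f) e (x', f)
  | dia_other {x x' : k.X} {e e' : E} {f : F P E} :
      k.T x e x' → Step0 k (x, .dia e' f) e (x', .base .tt)
  | inv_sub {x x' : k.X} {e : E} {f f' : F P E} :
      Step0 k (x, f) e (x', f') → SubF f' (.inv f) →
      Step0 k (x, .inv f) e (x', .inv f)
  | inv_nsub {x x' : k.X} {e : E} {f f' : F P E} :
      Step0 k (x, f) e (x', f') → ¬ SubF f' (.inv f) →
      Step0 k (x, .inv f) e (x', .and (.inv f) f')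
  | reach_true {x x' : k.X} {e : E} {b : BF P} :
      k.T x e x' → Step0 k (x, .reach b) e (x', .base .tt)
  | reach_self {x x' : k.X} {e : E} {b : BF P} :
      k.T x e x' → Step0 k (x, .reach b) e (x', .reach b)
  | dlf {x x' : k.X} {e : E} :
      k.T x e x' → Step0 k (x, .dlf) e (x', .base .tt)

/-- Synthesizability of a formula at a state-formula pair, w.r.t. a relation Tn. -/
inductive Syn (k : KLTS P E) (Tn : k.X × F P E → E → k.X × F P E → Prop) :
    k.X × F P E → F P E → Prop where
  | base {x : k.X} {g : F P E} {b : BF P} :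
      BSat (k.L x) b → Syn k Tn (x, g) (.base b)
  | and {p : k.X × F P E} {f1 f2 : F P E} :
      Syn k Tn p f1 → Syn k Tn p f2 → Syn k Tn p (.and f1 f2)
  | orl {x : k.X} {g : F P E} {b : BF P} {f : F P E} :
      BSat (k.L x) b → Syn k Tn (x, g) (.or b f)
  | orr {p : k.X × F P E} {b : BF P} {f : F P E} :
      Syn k Tn p f → Syn k Tn p (.or b f)
  | box {p : k.X × F P E} {e : E} {f : F P E} : Syn k Tn p (.box e f)
  | dia {x x' : k.X} {g g' : F P E} {e : E} {f : F P E} :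
      Syn k Tn (x', g') f → Tn (x, g) e (x', g') → PartF k.L x' f g' →
      Syn k Tn (x, g) (.dia e f)
  | inv {p : k.X × F P E} {f : F P E} :
      Syn k Tn p f → Syn k Tn p (.inv f)
  | reach {x x' : k.X} {g g' : F P E} {b : BF P} :
      Relation.ReflTransGen (fun a c => ∃ e, Tn a e c) (x, g) (x', g') →
      BSat (k.L x') b → Syn k Tn (x, g) (.reach b)
  | dlf {p p' : k.X × F P E} {e : E} :
      Tn p e p' → Syn k Tn p .dlf

/-- The n-th iterate of the synthesis construction. -/
def StepN (k : KLTS P E) (U : Set E) :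
    ℕ → (k.X × F P E → E → k.X × F P E → Prop)
  | 0 => Step0 k
  | n + 1 => fun p e p' =>
      StepN k U n p e p' ∧ (e ∈ U ∨ Syn k (StepN k U n) p p.2)

/-- The synthesized system model S^n_{k,f}. -/
def Synth (k : KLTS P E) (U : Set E) (f : F P E) (n : ℕ) : KLTS P E :=
  ⟨k.X × F P E, fun p => k.L p.1, StepN k U n, (k.init, f)⟩

/-- Completeness: synthesizability holds at every reachable state-formula pair. -/
def Complete (k : KLTS P E) (U : Set E) (n : ℕ) (f : F P E) : Prop :=
  ∀ p' : k.X × F P E,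
    Relation.ReflTransGen (fun a c => ∃ e, StepN k U n a e c) (k.init, f) p' →
    Syn k (StepN k U n) p' p'.2

/-!
Validity is carried along synthesis steps: if `x` simulates a state `x'` of `k'` at which `g` is
valid, every transition of `x'` is matched by one of `x`, and along it `g` has a `→₀`-reduct that is
valid at the matched successor. By induction on `n`, every `→₀` step out of such a valid pair
survives in `→ₙ`, because the filter condition of `→ₙ₊₁` is the synthesizability of the valid pair
itself at level `n`. Synthesizability of the parts of a valid formula then follows by structural
induction: the witnesses demanded by `⟨e⟩`, `reach` and `dlf` are the `k'`-transitions that make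
them valid, transported through the simulation.
-/

-- `FSat` evaluates a modality by re-rooting `k` at a successor state, i.e. at this structure.
abbrev KLTS.withInit (k : KLTS P E) (x : k.X) : KLTS P E := ⟨k.X, k.L, k.T, x⟩

theorem PartF.trans {X : Type} {L : X → Set P} {x : X} {f g h : F P E}
    (hfg : PartF L x f g) (hgh : PartF L x g h) : PartF L x f h := by
  induction hgh with
  | refl => exact hfg
  | andL _ ih => exact .andL (ih hfg)
  | andR _ ih => exact .andR (ih hfg)
  | or hb _ ih => exact .or hb (ih hfg)
  | inv _ ih => exact .inv (ih hfg)

theorem SubF.partF {X : Type} {L : X → Set P} {x : X} {f g : F P E} (h : SubF f g) :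
    PartF L x f g := by
  induction h with
  | refl => exact .refl _
  | andL _ ih => exact .andL ih
  | andR _ ih => exact .andR ih
  | inv _ ih => exact .inv ih

namespace FSat

variable {k' k : KLTS P E}

theorem of_inv {g : F P E} (h : FSat k (.inv g)) : FSat k g :=
  h k.init .refl

theorem inv_of_T {x y : k.X} {e : E} {g : F P E} (hxy : k.T x e y)
    (h : FSat (k.withInit x) (.inv g)) : FSat (k.withInit y) (.inv g) :=
  fun z hz => h z (.head ⟨e, hxy⟩ hz)

theorem of_or {x' : k'.X} {x : k.X} (hL : k'.L x' = k.L x) {b : BF P} {f : F P E}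
    (hb : ¬ BSat (k.L x) b) (h : FSat (k'.withInit x') (.or b f)) :
    FSat (k'.withInit x') f :=
  h.resolve_left fun hb' => hb (hL ▸ hb')

theorem of_partF {x' : k'.X} {x : k.X} (hL : k'.L x' = k.L x) {f g : F P E}
    (hp : PartF k.L x f g) (hv : FSat (k'.withInit x') g) : FSat (k'.withInit x') f := by
  induction hp with
  | refl => exact hv
  | andL _ ih => exact ih hv.1
  | andR _ ih => exact ih hv.2
  | or hb _ ih => exact ih (of_or hL hb hv)
  | inv _ ih => exact ih hv.of_inv

end FSat

section StepMatching

variable {k' k : KLTS P E} {x' y' : k'.X} {x y : k.X} {e : E}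

theorem exists_step0_fsat (hL : k'.L x' = k.L x) (hxy : k.T x e y) (ht : k'.T x' e y')
    (g : F P E) (hv : FSat (k'.withInit x') g) :
    ∃ g', Step0 k (x, g) e (y, g') ∧ FSat (k'.withInit y') g' := by
  induction g with
  | base b => exact ⟨.base .tt, .base hxy, trivial⟩
  | and g₁ g₂ ih₁ ih₂ =>
    obtain ⟨g₁', s₁, v₁⟩ := ih₁ hv.1
    obtain ⟨g₂', s₂, v₂⟩ := ih₂ hv.2
    by_cases hs : SubF g₂' g₁'
    · exact ⟨g₁', .and_sub s₁ s₂ hs, v₁⟩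
    · exact ⟨.and g₁' g₂', .and_nsub s₁ s₂ hs, v₁, v₂⟩
  | or b g₁ ih =>
    by_cases hb : BSat (k.L x) b
    · exact ⟨.base .tt, .or_true hxy hb, trivial⟩
    · obtain ⟨g₁', s, v⟩ := ih (FSat.of_or hL hb hv)
      exact ⟨g₁', .or_step s, v⟩
  | box e₀ g₁ =>
    by_cases he : e = e₀
    · subst he
      exact ⟨g₁, .box_same hxy, hv y' ht⟩
    · exact ⟨.base .tt, .box_other hxy he, trivial⟩
  | dia => exact ⟨.base .tt, .dia_other hxy, trivial⟩
  | inv g₁ ih =>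
    obtain ⟨g₁', s, v⟩ := ih hv.of_inv
    by_cases hs : SubF g₁' (.inv g₁)
    · exact ⟨.inv g₁, .inv_sub s hs, hv.inv_of_T ht⟩
    · exact ⟨.and (.inv g₁) g₁', .inv_nsub s hs, hv.inv_of_T ht, v⟩
  | reach => exact ⟨.base .tt, .reach_true hxy, trivial⟩
  | dlf => exact ⟨.base .tt, .dlf hxy, trivial⟩

theorem exists_step0_fsat_partF_of_dia (hL : k'.L x' = k.L x) (hxy : k.T x e y)
    (ht : k'.T x' e y') {f : F P E} (hf : FSat (k'.withInit y') f) {g : F P E}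
    (hp : PartF k.L x (.dia e f) g) (hv : FSat (k'.withInit x') g) :
    ∃ g', Step0 k (x, g) e (y, g') ∧ FSat (k'.withInit y') g' ∧ PartF k.L y f g' := by
  generalize hd : F.dia e f = d at hp
  induction hp with
  | refl =>
    subst hd
    exact ⟨f, .dia_same hxy, hf, .refl f⟩
  | @andL _ g₁ g₂ _ ih =>
    obtain ⟨g₁', s₁, v₁, p₁⟩ := ih hv.1 hd
    obtain ⟨g₂', s₂, v₂⟩ := exists_step0_fsat hL hxy ht g₂ hv.2
    by_cases hs : SubF g₂' g₁'
    · exact ⟨g₁', .and_sub s₁ s₂ hs, v₁, p₁⟩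
    · exact ⟨.and g₁' g₂', .and_nsub s₁ s₂ hs, ⟨v₁, v₂⟩, .andL p₁⟩
  | @andR _ g₁ g₂ _ ih =>
    obtain ⟨g₂', s₂, v₂, p₂⟩ := ih hv.2 hd
    obtain ⟨g₁', s₁, v₁⟩ := exists_step0_fsat hL hxy ht g₁ hv.1
    by_cases hs : SubF g₂' g₁'
    · exact ⟨g₁', .and_sub s₁ s₂ hs, v₁, p₂.trans hs.partF⟩
    · exact ⟨.and g₁' g₂', .and_nsub s₁ s₂ hs, ⟨v₁, v₂⟩, .andR p₂⟩
  | or hb _ ih =>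
    obtain ⟨g', s, v, p⟩ := ih (FSat.of_or hL hb hv) hd
    exact ⟨g', .or_step s, v, p⟩
  | @inv _ g₁ _ ih =>
    obtain ⟨g₁', s, v, p⟩ := ih hv.of_inv hd
    by_cases hs : SubF g₁' (.inv g₁)
    · exact ⟨.inv g₁, .inv_sub s hs, hv.inv_of_T ht, p.trans hs.partF⟩
    · exact ⟨.and (.inv g₁) g₁', .inv_nsub s hs, ⟨hv.inv_of_T ht, v⟩, .andR p⟩

end StepMatching

section Synthesizability

variable {k' k : KLTS P E} {R : k'.X → k.X → Prop} {Tn : k.X × F P E → E → k.X × F P E → Prop}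

def KeepsValidSteps (R : k'.X → k.X → Prop) (Tn : k.X × F P E → E → k.X × F P E → Prop) :
    Prop :=
  ∀ ⦃x' x g e p'⦄, R x' x → FSat (k'.withInit x') g → Step0 k (x, g) e p' → Tn (x, g) e p'

theorem exists_reflTransGen_of_star (hR : SimRel k' k R) (hT : KeepsValidSteps R Tn)
    {x' z' : k'.X} (hstar : k'.Star x' z') {x : k.X} {g : F P E} (hx : R x' x)
    (hv : FSat (k'.withInit x') g) :
    ∃ z g', Relation.ReflTransGen (fun a c => ∃ e, Tn a e c) (x, g) (z, g') ∧ R z' z := by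
  induction hstar using Relation.ReflTransGen.head_induction_on generalizing x g with
  | refl => exact ⟨x, g, .refl, hx⟩
  | head hstep _ ih =>
    obtain ⟨e, ht⟩ := hstep
    obtain ⟨hL, hsim⟩ := hR _ _ hx
    obtain ⟨y, hxy, hy⟩ := hsim e _ ht
    obtain ⟨g', s, v⟩ := exists_step0_fsat hL hxy ht g hv
    obtain ⟨z, g'', hpath, hz⟩ := ih hy v
    exact ⟨z, g'', .head ⟨e, hT hx hv s⟩ hpath, hz⟩

theorem syn_of_partF (hR : SimRel k' k R) (hT : KeepsValidSteps R Tn) (f : F P E)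
    {x' : k'.X} {x : k.X} {g : F P E} (hx : R x' x) (hv : FSat (k'.withInit x') g)
    (hp : PartF k.L x f g) : Syn k Tn (x, g) f := by
  have hL : k'.L x' = k.L x := (hR x' x hx).1
  have hf : FSat (k'.withInit x') f := FSat.of_partF hL hp hv
  induction f generalizing x' x g with
  | base => exact .base (hL ▸ hf)
  | and f₁ f₂ ih₁ ih₂ =>
    exact .and (ih₁ hx hv ((PartF.andL (.refl f₁)).trans hp) hL hf.1)
      (ih₂ hx hv ((PartF.andR (.refl f₂)).trans hp) hL hf.2)
  | or b f₁ ih =>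
    by_cases hb : BSat (k.L x) b
    · exact .orl hb
    · exact .orr (ih hx hv ((PartF.or hb (.refl f₁)).trans hp) hL (FSat.of_or hL hb hf))
  | box => exact .box
  | dia e f₁ ih =>
    obtain ⟨y', ht, hf₁⟩ := hf
    obtain ⟨y, hxy, hy⟩ := (hR x' x hx).2 e y' ht
    obtain ⟨g', s, v, p⟩ := exists_step0_fsat_partF_of_dia hL hxy ht hf₁ hp hv
    exact .dia (ih hy v p (hR y' y hy).1 hf₁) (hT hx hv s) p
  | inv f₁ ih => exact .inv (ih hx hv ((PartF.inv (.refl f₁)).trans hp) hL hf.of_inv)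
  | reach b =>
    obtain ⟨z', hstar, hb⟩ := hf
    obtain ⟨z, _, hpath, hz⟩ := exists_reflTransGen_of_star hR hT hstar hx hv
    exact .reach hpath ((hR z' z hz).1 ▸ hb)
  | dlf =>
    obtain ⟨e, y', ht⟩ := hf
    obtain ⟨y, hxy, _⟩ := (hR x' x hx).2 e y' ht
    obtain ⟨_, s, _⟩ := exists_step0_fsat hL hxy ht g hv
    exact .dlf (hT hx hv s)

theorem keepsValidSteps_stepN (hR : SimRel k' k R) (U : Set E) (n : ℕ) :
    KeepsValidSteps R (StepN k U n) := by
  induction n with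
  | zero => exact fun _ _ _ _ _ _ _ s => s
  | succ n ih =>
    exact fun _ _ g _ _ hx hv s => ⟨ih hx hv s, .inr (syn_of_partF hR ih g hx hv (.refl g))⟩

end Synthesizability

/-- Synthesizability at states simulating a valid model (Lemma part_val_syn). -/
theorem part_val_syn {P E : Type} (k' k : KLTS P E) (U : Set E)
    (f g : F P E) (hsim : Sim k' k)
    (hp : PartF k.L k.init f g) (hv : FSat k' g) :
    ∀ n : ℕ, Syn k (StepN k U n) (k.init, g) f := by
  obtain ⟨R, hinit, hR⟩ := hsim
  exact fun n => syn_of_partF hR (keepsValidSteps_stepN hR U n) f hinit hv hp
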